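/- arXiv:2306.03563 — 4 statements merged into one kernel-verified Lean document; each statement's English description precedes it below -/
import Mathlib

section
/- Let z ∈ ℝ^n be a solution of ICP(q,A,ζ) and set x := (γ/2)·(Ω₁⁻¹(z − ζ(z)) − Ω₂⁻¹(Az + q)). Then |x| = (γ/2)·(Ω₁⁻¹(z − ζ(z)) + Ω₂⁻¹(Az + q)), and x satisfies the fixed-point equation (Ω₂ + M_{Ω₁} + φ_{Ω₁})x = (N_{Ω₁} + φ_{Ω₁})x + (Ω₂ − A_{Ω₁})|x| − γAζ(z) − γq. -/
open Matrix Filter Topology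

noncomputable section

variable {n : ℕ}

/-- entrywise absolute value of a vector -/
def vecAbs (x : Fin n → ℝ) : Fin n → ℝ := fun i => |x i|

/-- entrywise absolute value of a matrix -/
def matAbs (A : Matrix (Fin n) (Fin n) ℝ) : Matrix (Fin n) (Fin n) ℝ :=
  Matrix.of fun i j => |A i j|

/-- positive diagonal matrix -/
def PosDiag (Ω : Matrix (Fin n) (Fin n) ℝ) : Prop := Ω.IsDiag ∧ ∀ i, 0 < Ω i i

/-- comparison matrix ⟨A⟩ -/
def compMat (A : Matrix (Fin n) (Fin n) ℝ) : Matrix (Fin n) (Fin n) ℝ :=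
  Matrix.of fun i j => if i = j then |A i j| else -|A i j|

/-- Z-matrix: nonpositive off-diagonal entries -/
def IsZmat (A : Matrix (Fin n) (Fin n) ℝ) : Prop := ∀ i j, i ≠ j → A i j ≤ 0

/-- nonsingular M-matrix: a Z-matrix, invertible, with entrywise nonnegative inverse -/
def IsMmat (A : Matrix (Fin n) (Fin n) ℝ) : Prop :=
  IsZmat A ∧ IsUnit A ∧ ∀ i j, 0 ≤ A⁻¹ i j

/-- H₊-matrix: comparison matrix is a nonsingular M-matrix, positive diagonal entries -/
def IsHplus (A : Matrix (Fin n) (Fin n) ℝ) : Prop :=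
  IsMmat (compMat A) ∧ ∀ i, 0 < A i i

/-- P-matrix: all principal minors are positive -/
def IsPmat (A : Matrix (Fin n) (Fin n) ℝ) : Prop :=
  ∀ s : Finset (Fin n),
    0 < (A.submatrix (fun i : {i // i ∈ s} => (i : Fin n))
          (fun i : {i // i ∈ s} => (i : Fin n))).det

/-- spectral radius, via the complex spectrum -/
def specRad (A : Matrix (Fin n) (Fin n) ℝ) : ℝ :=
  sSup ((fun μ : ℂ => ‖μ‖) '' spectrum ℂ (A.map Complex.ofReal))

/-- spectral (operator 2-) norm -/
def spec2Norm (A : Matrix (Fin n) (Fin n) ℝ) : ℝ :=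
  ‖Matrix.toEuclideanCLM (𝕜 := ℝ) A‖

/-- strict diagonal dominance -/
def SDD (A : Matrix (Fin n) (Fin n) ℝ) : Prop :=
  ∀ i, (∑ j ∈ Finset.univ.erase i, |A i j|) < |A i i|

/-- `z` solves the implicit complementarity problem ICP(q, A, ζ) -/
def SolvesICP (A : Matrix (Fin n) (Fin n) ℝ) (q : Fin n → ℝ)
    (ζ : (Fin n → ℝ) → (Fin n → ℝ)) (z : Fin n → ℝ) : Prop :=
  (∀ i, 0 ≤ (A.mulVec z + q) i) ∧ (∀ i, 0 ≤ (z - ζ z) i) ∧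
    (z - ζ z) ⬝ᵥ (A.mulVec z + q) = 0

/-- the sequences `x`, `z` are produced by Method 3.1 -/
def Method31 (A M N φ Ω₁ Ω₂ : Matrix (Fin n) (Fin n) ℝ) (q : Fin n → ℝ)
    (ζ : (Fin n → ℝ) → (Fin n → ℝ)) (γ : ℝ) (x z : ℕ → Fin n → ℝ) : Prop :=
  (∀ k, A *ᵥ z k = γ⁻¹ • (Ω₂ *ᵥ (vecAbs (x k) - x k)) - q) ∧
  (∀ k, x (k+1) = (Ω₂ + M * Ω₁ + φ * Ω₁)⁻¹ *ᵥ
      ((N * Ω₁ + φ * Ω₁) *ᵥ x k + (Ω₂ - A * Ω₁) *ᵥ vecAbs (x k)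
        - γ • (A *ᵥ ζ (z k)) - γ • q))

lemma diag_inv_aux (v : Fin n → ℝ) (h : ∀ i, 0 < v i) :
    (Matrix.diagonal v)⁻¹ = Matrix.diagonal (fun i => (v i)⁻¹) := by
  apply Matrix.inv_eq_right_inv
  rw [Matrix.diagonal_mul_diagonal,
    show (fun i => v i * (v i)⁻¹) = fun _ => (1:ℝ) from
      funext fun i => mul_inv_cancel₀ (h i).ne',
    Matrix.diagonal_one]

theorem stmt0 (A M N φ Ω₁ Ω₂ : Matrix (Fin n) (Fin n) ℝ)
    (q : Fin n → ℝ) (ζ : (Fin n → ℝ) → (Fin n → ℝ)) (γ : ℝ)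
    (hγ : 0 < γ) (hΩ₁ : PosDiag Ω₁) (hΩ₂ : PosDiag Ω₂) (hφ : φ.IsDiag)
    (hsplit : A = (M + φ) - (N + φ))
    (z : Fin n → ℝ) (hz : SolvesICP A q ζ z)
    (x : Fin n → ℝ)
    (hx : x = (γ / 2) • (Ω₁⁻¹ *ᵥ (z - ζ z) - Ω₂⁻¹ *ᵥ (A *ᵥ z + q))) :
    vecAbs x = (γ / 2) • (Ω₁⁻¹ *ᵥ (z - ζ z) + Ω₂⁻¹ *ᵥ (A *ᵥ z + q)) ∧
    (Ω₂ + M * Ω₁ + φ * Ω₁) *ᵥ x =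
      (N * Ω₁ + φ * Ω₁) *ᵥ x + (Ω₂ - A * Ω₁) *ᵥ vecAbs x
        - γ • (A *ᵥ ζ z) - γ • q := by
  obtain ⟨h1d, h1p⟩ := hΩ₁
  obtain ⟨h2d, h2p⟩ := hΩ₂
  obtain ⟨hq, hzz, hdot⟩ := hz
  set u : Fin n → ℝ := z - ζ z with hu
  set v : Fin n → ℝ := A *ᵥ z + q with hv
  -- diagonal forms
  have hΩ₁eq : Ω₁ = Matrix.diagonal (fun i => Ω₁ i i) := (h1d.diagonal_diag).symm
  have hΩ₂eq : Ω₂ = Matrix.diagonal (fun i => Ω₂ i i) := (h2d.diagonal_diag).symm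
  have hΩ₁inv : Ω₁⁻¹ = Matrix.diagonal (fun i => (Ω₁ i i)⁻¹) :=
    (congrArg Inv.inv hΩ₁eq).trans (diag_inv_aux _ h1p)
  have hΩ₂inv : Ω₂⁻¹ = Matrix.diagonal (fun i => (Ω₂ i i)⁻¹) :=
    (congrArg Inv.inv hΩ₂eq).trans (diag_inv_aux _ h2p)
  -- componentwise complementarity
  have hcomp : ∀ i, u i * v i = 0 := by
    intro i
    have := (Finset.sum_eq_zero_iff_of_nonneg (fun j _ =>
      mul_nonneg (hzz j) (hq j))).mp hdot i (Finset.mem_univ i)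
    exact this
  -- componentwise x
  have hxi : ∀ i, x i = (γ/2) * ((Ω₁ i i)⁻¹ * u i - (Ω₂ i i)⁻¹ * v i) := by
    intro i
    rw [hx, hΩ₁inv, hΩ₂inv]
    simp [Matrix.mulVec_diagonal]
  -- part 1
  have habs : vecAbs x = (γ / 2) • (Ω₁⁻¹ *ᵥ u + Ω₂⁻¹ *ᵥ v) := by
    funext i
    have ha : 0 ≤ (Ω₁ i i)⁻¹ * u i := mul_nonneg (inv_nonneg.mpr (h1p i).le) (hzz i)
    have hb : 0 ≤ (Ω₂ i i)⁻¹ * v i := mul_nonneg (inv_nonneg.mpr (h2p i).le) (hq i)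
    have hab : ((Ω₁ i i)⁻¹ * u i) * ((Ω₂ i i)⁻¹ * v i) = 0 := by
      rw [mul_mul_mul_comm, hcomp i, mul_zero]
    have key : |(Ω₁ i i)⁻¹ * u i - (Ω₂ i i)⁻¹ * v i|
        = (Ω₁ i i)⁻¹ * u i + (Ω₂ i i)⁻¹ * v i := by
      rcases mul_eq_zero.mp hab with h | h <;> rw [h] <;> simp [abs_of_nonneg, ha, hb]
    have : vecAbs x i = |x i| := rfl
    rw [this, hxi i, abs_mul, abs_of_pos (by positivity : (0:ℝ) < γ/2), key,
      hΩ₁inv, hΩ₂inv]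
    simp [Matrix.mulVec_diagonal]
  refine ⟨habs, ?_⟩
  -- key vector identities
  have hne1 : ∀ i, (Ω₁ i i : ℝ) ≠ 0 := fun i => (h1p i).ne'
  have hne2 : ∀ i, (Ω₂ i i : ℝ) ≠ 0 := fun i => (h2p i).ne'
  have h1 : Ω₁ *ᵥ (x + vecAbs x) = γ • u := by
    funext i
    have : (x + vecAbs x) i = γ * ((Ω₁ i i)⁻¹ * u i) := by
      have := hxi i
      have h2 : vecAbs x i = (γ/2) * ((Ω₁ i i)⁻¹ * u i + (Ω₂ i i)⁻¹ * v i) := by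
        rw [habs, hΩ₁inv, hΩ₂inv]; simp [Matrix.mulVec_diagonal]
      simp only [Pi.add_apply, this, h2]; ring
    rw [hΩ₁eq]
    simp only [Matrix.mulVec_diagonal, this, Pi.smul_apply, smul_eq_mul]
    have hne := hne1 i
    field_simp
  have h2 : Ω₂ *ᵥ (vecAbs x - x) = γ • v := by
    funext i
    have : (vecAbs x - x) i = γ * ((Ω₂ i i)⁻¹ * v i) := by
      have h2' : vecAbs x i = (γ/2) * ((Ω₁ i i)⁻¹ * u i + (Ω₂ i i)⁻¹ * v i) := by
        rw [habs, hΩ₁inv, hΩ₂inv]; simp [Matrix.mulVec_diagonal]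
      simp only [Pi.sub_apply, hxi i, h2']; ring
    rw [hΩ₂eq]
    simp only [Matrix.mulVec_diagonal, this, Pi.smul_apply, smul_eq_mul]
    have hne := hne2 i
    field_simp
  -- assemble
  have hMN : M * Ω₁ - N * Ω₁ = A * Ω₁ := by
    have : A = M - N := by rw [hsplit]; abel
    rw [this, Matrix.sub_mul]
  have e1 : (A * Ω₁) *ᵥ (x + vecAbs x) = γ • (A *ᵥ u) := by
    rw [← Matrix.mulVec_mulVec, h1, Matrix.mulVec_smul]
  have hAu : A *ᵥ u = A *ᵥ z - A *ᵥ ζ z := by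
    rw [hu, Matrix.mulVec_sub]
  -- goal
  have expand : ∀ w : Fin n → ℝ, True := fun _ => trivial
  simp only [Matrix.add_mulVec, Matrix.sub_mulVec]
  have e1' : (A * Ω₁) *ᵥ x + (A * Ω₁) *ᵥ vecAbs x = γ • (A *ᵥ z) - γ • (A *ᵥ ζ z) := by
    rw [← Matrix.mulVec_add, e1, hAu, smul_sub]
  have e2' : Ω₂ *ᵥ vecAbs x - Ω₂ *ᵥ x = γ • (A *ᵥ z) + γ • q := by
    rw [← Matrix.mulVec_sub, h2, hv, smul_add]
  have hM : (M * Ω₁) *ᵥ x = (N * Ω₁) *ᵥ x + (A * Ω₁) *ᵥ x := by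
    rw [← hMN]; simp [Matrix.sub_mulVec]
  rw [hM]
  have goal' : (A * Ω₁) *ᵥ x + (Ω₂ *ᵥ x)
      = (Ω₂ *ᵥ vecAbs x - (A * Ω₁) *ᵥ vecAbs x) - γ • (A *ᵥ ζ z) - γ • q := by
    have := e1'
    have := e2'
    linear_combination (norm := abel) e1' - e2'
  linear_combination (norm := abel) goal'
end
end

section
/- Suppose x, z ∈ ℝ^n satisfy z = ζ(z) + γ⁻¹Ω₁(|x| + x) and the fixed-point equation (Ω₂ + M_{Ω₁} + φ_{Ω₁})x = (N_{Ω₁} + φ_{Ω₁})x + (Ω₂ − A_{Ω₁})|x| − γAζ(z) − γq. Then Az + q = γ⁻¹Ω₂(|x| − x) and z is a solution of ICP(q,A,ζ), i.e. Az + q ≥ 0, z − ζ(z) ≥ 0 and (z − ζ(z))ᵀ(Az + q) = 0. -/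
open Matrix Filter Topology

noncomputable section

variable {n : ℕ}

theorem stmt1 (A M N φ Ω₁ Ω₂ : Matrix (Fin n) (Fin n) ℝ)
    (q : Fin n → ℝ) (ζ : (Fin n → ℝ) → (Fin n → ℝ)) (γ : ℝ)
    (hγ : 0 < γ) (hΩ₁ : PosDiag Ω₁) (hΩ₂ : PosDiag Ω₂) (hφ : φ.IsDiag)
    (hsplit : A = (M + φ) - (N + φ))
    (x z : Fin n → ℝ)
    (hz : z = ζ z + γ⁻¹ • (Ω₁ *ᵥ (vecAbs x + x)))
    (hfix : (Ω₂ + M * Ω₁ + φ * Ω₁) *ᵥ x =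
      (N * Ω₁ + φ * Ω₁) *ᵥ x + (Ω₂ - A * Ω₁) *ᵥ vecAbs x
        - γ • (A *ᵥ ζ z) - γ • q) :
    A *ᵥ z + q = γ⁻¹ • (Ω₂ *ᵥ (vecAbs x - x)) ∧ SolvesICP A q ζ z := by
  have hγ0 : γ ≠ 0 := ne_of_gt hγ
  have hA : A * Ω₁ = M * Ω₁ - N * Ω₁ := by rw [hsplit]; noncomm_ring
  -- key rearrangement of hfix
  have key : (A * Ω₁) *ᵥ (vecAbs x + x) =
      Ω₂ *ᵥ (vecAbs x - x) - γ • (A *ᵥ ζ z) - γ • q := by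
    rw [hA]
    rw [hA] at hfix
    funext i
    have h := congrFun hfix i
    simp only [Matrix.add_mulVec, Matrix.sub_mulVec, Matrix.mulVec_add,
      Matrix.mulVec_sub, Pi.add_apply, Pi.sub_apply, Pi.smul_apply,
      smul_eq_mul] at h ⊢
    linarith
  have hzsub : z - ζ z = γ⁻¹ • (Ω₁ *ᵥ (vecAbs x + x)) :=
    sub_eq_of_eq_add' hz
  have main : A *ᵥ z + q = γ⁻¹ • (Ω₂ *ᵥ (vecAbs x - x)) := by
    have hAz : A *ᵥ z = A *ᵥ ζ z + γ⁻¹ • ((A * Ω₁) *ᵥ (vecAbs x + x)) := by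
      conv_lhs => rw [hz]
      rw [Matrix.mulVec_add, Matrix.mulVec_smul, Matrix.mulVec_mulVec]
    rw [hAz, key]
    funext i
    simp only [Pi.add_apply, Pi.sub_apply, Pi.smul_apply, smul_eq_mul]
    field_simp
    ring
  have diagmul : ∀ (D : Matrix (Fin n) (Fin n) ℝ), D.IsDiag →
      ∀ (v : Fin n → ℝ) (i : Fin n), (D *ᵥ v) i = D i i * v i := by
    intro D hD v i
    simp only [Matrix.mulVec, dotProduct]
    rw [Finset.sum_eq_single i]
    · intro j _ hj; rw [hD (Ne.symm hj), zero_mul]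
    · intro h; exact absurd (Finset.mem_univ i) h
  refine ⟨main, ?_, ?_, ?_⟩
  · intro i
    rw [main]
    simp only [Pi.smul_apply, smul_eq_mul, diagmul Ω₂ hΩ₂.1]
    have h1 : 0 ≤ vecAbs x i - x i := by simp [vecAbs, le_abs_self, sub_nonneg]
    exact mul_nonneg (inv_nonneg.2 hγ.le) (mul_nonneg (hΩ₂.2 i).le h1)
  · intro i
    rw [hzsub]
    simp only [Pi.smul_apply, smul_eq_mul, diagmul Ω₁ hΩ₁.1]
    have h1 : 0 ≤ vecAbs x i + x i := by
      simp only [vecAbs, Pi.add_apply]; linarith [neg_abs_le (x i)]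
    exact mul_nonneg (inv_nonneg.2 hγ.le) (mul_nonneg (hΩ₁.2 i).le h1)
  · rw [hzsub, main]
    simp only [dotProduct, Pi.smul_apply, smul_eq_mul,
      diagmul Ω₁ hΩ₁.1, diagmul Ω₂ hΩ₂.1]
    apply Finset.sum_eq_zero
    intro i _
    simp only [Pi.add_apply, Pi.sub_apply, vecAbs]
    have h0 : (|x i| + x i) * (|x i| - x i) = 0 := by
      have := sq_abs (x i); nlinarith
    calc γ⁻¹ * (Ω₁ i i * (|x i| + x i)) * (γ⁻¹ * (Ω₂ i i * (|x i| - x i)))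
        = γ⁻¹ * Ω₁ i i * (γ⁻¹ * Ω₂ i i) * ((|x i| + x i) * (|x i| - x i)) := by ring
      _ = 0 := by rw [h0, mul_zero]
end
end

section
/- Assume A and Ω₂ + M_{Ω₁} + φ_{Ω₁} are invertible and |ζ(u) − ζ(v)| ≤ Ψ|u − v| entrywise for all u, v ∈ ℝ^n, where Ψ ≥ 0. Let x*, z* satisfy Az* = γ⁻¹Ω₂(|x*| − x*) − q and the fixed-point equation (Ω₂ + M_{Ω₁} + φ_{Ω₁})x* = (N_{Ω₁} + φ_{Ω₁})x* + (Ω₂ − A_{Ω₁})|x*| − γAζ(z*) − γq. Then the iterates of Method 3.1 satisfy, for every k ≥ 0, |x^(k+1) − x*| ≤ T·|x^(k) − x*| entrywise, where T = |(Ω₂ + M_{Ω₁} + φ_{Ω₁})⁻¹|·(|N_{Ω₁} + φ_{Ω₁}| + |Ω₂ − A_{Ω₁}| + 2|A|Ψ|A⁻¹|Ω₂). -/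
open Matrix Filter Topology

noncomputable section

variable {n : ℕ}

lemma abs_mulVec_le (M : Matrix (Fin n) (Fin n) ℝ) (v : Fin n → ℝ) (i : Fin n) :
    |(M *ᵥ v) i| ≤ (matAbs M *ᵥ vecAbs v) i := by
  simp only [Matrix.mulVec, dotProduct, matAbs, vecAbs, Matrix.of_apply]
  calc |∑ j, M i j * v j| ≤ ∑ j, |M i j * v j| := Finset.abs_sum_le_sum_abs _ _
  _ = ∑ j, |M i j| * |v j| := by simp [abs_mul]

lemma mulVec_mono (M : Matrix (Fin n) (Fin n) ℝ) (hM : ∀ i j, 0 ≤ M i j)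
    (u v : Fin n → ℝ) (h : ∀ j, u j ≤ v j) (i : Fin n) :
    (M *ᵥ u) i ≤ (M *ᵥ v) i := by
  simp only [Matrix.mulVec, dotProduct]
  exact Finset.sum_le_sum fun j _ => mul_le_mul_of_nonneg_left (h j) (hM i j)

lemma matAbs_nonneg (M : Matrix (Fin n) (Fin n) ℝ) : ∀ i j, 0 ≤ matAbs M i j :=
  fun _ _ => abs_nonneg _

lemma diag_mulVec (Ω : Matrix (Fin n) (Fin n) ℝ) (hΩ : Ω.IsDiag) (v : Fin n → ℝ)
    (m : Fin n) : (Ω *ᵥ v) m = Ω m m * v m := by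
  simp only [Matrix.mulVec, dotProduct]
  rw [Finset.sum_eq_single m]
  · intro j _ hj
    rw [hΩ hj.symm, zero_mul]
  · intro h; exact absurd (Finset.mem_univ m) h

lemma mulVec_const_mul (M : Matrix (Fin n) (Fin n) ℝ) (c : ℝ) (v : Fin n → ℝ)
    (j : Fin n) : (M *ᵥ (fun m => c * v m)) j = c * (M *ᵥ v) j := by
  simp only [Matrix.mulVec, dotProduct, Finset.mul_sum]
  congr 1; ext m; ring

theorem stmt3 (A M N φ Ω₁ Ω₂ Ψ : Matrix (Fin n) (Fin n) ℝ)
    (q : Fin n → ℝ) (ζ : (Fin n → ℝ) → (Fin n → ℝ)) (γ : ℝ)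
    (hγ : 0 < γ) (hΩ₁ : PosDiag Ω₁) (hΩ₂ : PosDiag Ω₂) (hφ : φ.IsDiag)
    (hsplit : A = (M + φ) - (N + φ))
    (hA : IsUnit A) (hW : IsUnit (Ω₂ + M * Ω₁ + φ * Ω₁))
    (hΨ : ∀ i j, 0 ≤ Ψ i j)
    (hLip : ∀ u v : Fin n → ℝ, ∀ i, |(ζ u - ζ v) i| ≤ (Ψ *ᵥ vecAbs (u - v)) i)
    (x z : ℕ → Fin n → ℝ) (hmthd : Method31 A M N φ Ω₁ Ω₂ q ζ γ x z)
    (xs zs : Fin n → ℝ)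
    (hzs : A *ᵥ zs = γ⁻¹ • (Ω₂ *ᵥ (vecAbs xs - xs)) - q)
    (hfix : (Ω₂ + M * Ω₁ + φ * Ω₁) *ᵥ xs =
      (N * Ω₁ + φ * Ω₁) *ᵥ xs + (Ω₂ - A * Ω₁) *ᵥ vecAbs xs
        - γ • (A *ᵥ ζ zs) - γ • q)
    (T : Matrix (Fin n) (Fin n) ℝ)
    (hT : T = matAbs (Ω₂ + M * Ω₁ + φ * Ω₁)⁻¹ *
      (matAbs (N * Ω₁ + φ * Ω₁) + matAbs (Ω₂ - A * Ω₁)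
        + (2 : ℝ) • (matAbs A * Ψ * matAbs A⁻¹ * Ω₂))) :
    ∀ k, ∀ i, |(x (k+1) - xs) i| ≤ (T *ᵥ vecAbs (x k - xs)) i := by
  intro k i
  obtain ⟨hm1, hm2⟩ := hmthd
  set W := Ω₂ + M * Ω₁ + φ * Ω₁ with hWdef
  have hWdet : IsUnit W.det := (Matrix.isUnit_iff_isUnit_det _).mp hW
  have hAdet : IsUnit A.det := (Matrix.isUnit_iff_isUnit_det _).mp hA
  have hγ' : γ ≠ 0 := ne_of_gt hγ
  set e : Fin n → ℝ := x k - xs with hedef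
  set ea : Fin n → ℝ := vecAbs e with headef
  set f : Fin n → ℝ := vecAbs (x k) - vecAbs xs with hfdef
  set g : Fin n → ℝ := ζ (z k) - ζ zs with hgdef
  set d : Fin n → ℝ := (N * Ω₁ + φ * Ω₁) *ᵥ e + (Ω₂ - A * Ω₁) *ᵥ f - γ • (A *ᵥ g)
    with hddef
  -- fixed point as image of W⁻¹
  have hxs' : xs = W⁻¹ *ᵥ ((N * Ω₁ + φ * Ω₁) *ᵥ xs + (Ω₂ - A * Ω₁) *ᵥ vecAbs xs
      - γ • (A *ᵥ ζ zs) - γ • q) := by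
    rw [← hfix, Matrix.mulVec_mulVec, Matrix.nonsing_inv_mul _ hWdet, Matrix.one_mulVec]
  have hx1 : x (k+1) - xs = W⁻¹ *ᵥ d := by
    conv_lhs => rw [hm2 k, hxs']
    rw [← Matrix.mulVec_sub]
    congr 1
    simp only [hddef, hedef, hfdef, hgdef, Matrix.mulVec_sub, Matrix.mulVec_add, Matrix.mulVec_smul, smul_sub]
    abel
  -- bound on A (z k - zs)
  have hAz : ∀ m, |(A *ᵥ (z k - zs)) m| ≤ 2 * γ⁻¹ * (Ω₂ *ᵥ ea) m := by
    intro m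
    have h1 : (A *ᵥ (z k - zs)) m
        = γ⁻¹ * (Ω₂ m m * ((vecAbs (x k) - x k) m - (vecAbs xs - xs) m)) := by
      rw [Matrix.mulVec_sub]
      simp only [Pi.sub_apply, hm1 k, hzs, Pi.smul_apply, smul_eq_mul]
      rw [diag_mulVec Ω₂ hΩ₂.1, diag_mulVec Ω₂ hΩ₂.1]
      simp only [Pi.sub_apply]
      ring
    rw [h1, diag_mulVec Ω₂ hΩ₂.1]
    have h2 : |(vecAbs (x k) - x k) m - (vecAbs xs - xs) m| ≤ 2 * ea m := by
      simp only [vecAbs, Pi.sub_apply, headef, hedef]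
      have := abs_abs_sub_abs_le_abs_sub (x k m) (xs m)
      have h3 : |x k m| - x k m - (|xs m| - xs m)
          = (|x k m| - |xs m|) - (x k m - xs m) := by ring
      rw [h3]
      calc |(|x k m| - |xs m|) - (x k m - xs m)|
          ≤ |(|x k m| - |xs m|)| + |x k m - xs m| := abs_sub _ _
        _ ≤ |x k m - xs m| + |x k m - xs m| := by linarith
        _ = 2 * |x k m - xs m| := by ring
    rw [abs_mul, abs_mul, abs_of_pos (inv_pos.mpr hγ), abs_of_pos (hΩ₂.2 m)]
    calc γ⁻¹ * (Ω₂ m m * |(vecAbs (x k) - x k) m - (vecAbs xs - xs) m|)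
        ≤ γ⁻¹ * (Ω₂ m m * (2 * ea m)) := by
          apply mul_le_mul_of_nonneg_left _ (le_of_lt (inv_pos.mpr hγ))
          exact mul_le_mul_of_nonneg_left h2 (le_of_lt (hΩ₂.2 m))
      _ = 2 * γ⁻¹ * (Ω₂ m m * ea m) := by ring
  -- bound on z k - zs
  have hzd : ∀ j, |(z k - zs) j| ≤ 2 * γ⁻¹ * ((matAbs A⁻¹ * Ω₂) *ᵥ ea) j := by
    intro j
    have h1 : z k - zs = A⁻¹ *ᵥ (A *ᵥ (z k - zs)) := by
      rw [Matrix.mulVec_mulVec, Matrix.nonsing_inv_mul _ hAdet, Matrix.one_mulVec]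
    calc |(z k - zs) j| = |(A⁻¹ *ᵥ (A *ᵥ (z k - zs))) j| := by rw [← h1]
      _ ≤ (matAbs A⁻¹ *ᵥ vecAbs (A *ᵥ (z k - zs))) j := abs_mulVec_le _ _ _
      _ ≤ (matAbs A⁻¹ *ᵥ (fun m => 2 * γ⁻¹ * (Ω₂ *ᵥ ea) m)) j :=
          mulVec_mono _ (matAbs_nonneg _) _ _ (fun m => hAz m) j
      _ = 2 * γ⁻¹ * ((matAbs A⁻¹ * Ω₂) *ᵥ ea) j := by
          rw [mulVec_const_mul, Matrix.mulVec_mulVec]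
  -- bound on g
  have hgd : ∀ m, |g m| ≤ 2 * γ⁻¹ *
      ((Ψ * (matAbs A⁻¹ * Ω₂)) *ᵥ ea) m := by
    intro m
    calc |g m| ≤ (Ψ *ᵥ vecAbs (z k - zs)) m := hLip (z k) zs m
      _ ≤ (Ψ *ᵥ (fun j => 2 * γ⁻¹ * ((matAbs A⁻¹ * Ω₂) *ᵥ ea) j)) m :=
          mulVec_mono _ hΨ _ _ (fun j => hzd j) m
      _ = 2 * γ⁻¹ * ((Ψ * (matAbs A⁻¹ * Ω₂)) *ᵥ ea) m := by
          rw [mulVec_const_mul, Matrix.mulVec_mulVec]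
  -- bound on d
  set S : Matrix (Fin n) (Fin n) ℝ := matAbs (N * Ω₁ + φ * Ω₁) + matAbs (Ω₂ - A * Ω₁)
      + (2 : ℝ) • (matAbs A * Ψ * matAbs A⁻¹ * Ω₂) with hSdef
  have hdd : ∀ j, |d j| ≤ (S *ᵥ ea) j := by
    intro j
    have hd : d j = ((N * Ω₁ + φ * Ω₁) *ᵥ e) j + ((Ω₂ - A * Ω₁) *ᵥ f) j
        - γ * (A *ᵥ g) j := by
      simp [hddef]
    have t1 : |((N * Ω₁ + φ * Ω₁) *ᵥ e) j| ≤ (matAbs (N * Ω₁ + φ * Ω₁) *ᵥ ea) j :=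
      abs_mulVec_le _ _ _
    have t2 : |((Ω₂ - A * Ω₁) *ᵥ f) j| ≤ (matAbs (Ω₂ - A * Ω₁) *ᵥ ea) j := by
      refine le_trans (abs_mulVec_le _ _ _) ?_
      refine mulVec_mono _ (matAbs_nonneg _) _ _ (fun m => ?_) j
      simp only [vecAbs, hfdef, Pi.sub_apply, headef, hedef]
      exact abs_abs_sub_abs_le_abs_sub _ _
    have t3 : |γ * (A *ᵥ g) j| ≤ 2 * ((matAbs A * Ψ * matAbs A⁻¹ * Ω₂) *ᵥ ea) j := by
      rw [abs_mul, abs_of_pos hγ]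
      calc γ * |(A *ᵥ g) j| ≤ γ * (matAbs A *ᵥ vecAbs g) j :=
            mul_le_mul_of_nonneg_left (abs_mulVec_le _ _ _) (le_of_lt hγ)
        _ ≤ γ * (matAbs A *ᵥ (fun m => 2 * γ⁻¹ *
              ((Ψ * (matAbs A⁻¹ * Ω₂)) *ᵥ ea) m)) j := by
            apply mul_le_mul_of_nonneg_left _ (le_of_lt hγ)
            exact mulVec_mono _ (matAbs_nonneg _) _ _ (fun m => hgd m) j
        _ = γ * (2 * γ⁻¹ * ((matAbs A * (Ψ * (matAbs A⁻¹ * Ω₂))) *ᵥ ea) j) := by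
            rw [mulVec_const_mul, Matrix.mulVec_mulVec]
        _ = 2 * ((matAbs A * Ψ * matAbs A⁻¹ * Ω₂) *ᵥ ea) j := by
            field_simp
            rw [mul_assoc, mul_assoc]
    have hS : (S *ᵥ ea) j = (matAbs (N * Ω₁ + φ * Ω₁) *ᵥ ea) j
        + (matAbs (Ω₂ - A * Ω₁) *ᵥ ea) j
        + 2 * ((matAbs A * Ψ * matAbs A⁻¹ * Ω₂) *ᵥ ea) j := by
      simp [hSdef, Matrix.add_mulVec, Matrix.smul_mulVec]
    rw [hd, hS]
    calc |((N * Ω₁ + φ * Ω₁) *ᵥ e) j + ((Ω₂ - A * Ω₁) *ᵥ f) j - γ * (A *ᵥ g) j|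
        ≤ |((N * Ω₁ + φ * Ω₁) *ᵥ e) j + ((Ω₂ - A * Ω₁) *ᵥ f) j| + |γ * (A *ᵥ g) j| :=
          abs_sub _ _
      _ ≤ |((N * Ω₁ + φ * Ω₁) *ᵥ e) j| + |((Ω₂ - A * Ω₁) *ᵥ f) j|
          + |γ * (A *ᵥ g) j| := by
          have := abs_add_le (((N * Ω₁ + φ * Ω₁) *ᵥ e) j) (((Ω₂ - A * Ω₁) *ᵥ f) j)
          linarith
      _ ≤ _ := by linarith
  -- conclude
  have hxe : (x (k+1) - xs) i = (W⁻¹ *ᵥ d) i := by rw [hx1]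
  rw [hxe, hT, ← Matrix.mulVec_mulVec]
  calc |(W⁻¹ *ᵥ d) i| ≤ (matAbs W⁻¹ *ᵥ vecAbs d) i := abs_mulVec_le _ _ _
    _ ≤ (matAbs W⁻¹ *ᵥ (S *ᵥ ea)) i :=
        mulVec_mono _ (matAbs_nonneg _) _ _ (fun j => hdd j) i

end
end

section
/- Let A be a P-matrix (hence invertible), Ω₂ + M_{Ω₁} + φ_{Ω₁} invertible, and |ζ(u) − ζ(v)| ≤ Ψ|u − v| entrywise for all u, v ∈ ℝ^n with Ψ ≥ 0. Suppose ρ(T) < 1, where T = |(Ω₂ + M_{Ω₁} + φ_{Ω₁})⁻¹|·(|N_{Ω₁} + φ_{Ω₁}| + |Ω₂ − A_{Ω₁}| + 2|A|Ψ|A⁻¹|Ω₂). Let x*, z* satisfy Az* = γ⁻¹Ω₂(|x*| − x*) − q and the fixed-point equation (Ω₂ + M_{Ω₁} + φ_{Ω₁})x* = (N_{Ω₁} + φ_{Ω₁})x* + (Ω₂ − A_{Ω₁})|x*| − γAζ(z*) − γq. Then for every initial vector x^(0) ∈ ℝ^n the sequence x^(k) generated by Method 3.1 converges to x* and the sequence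 z^(k) converges to z*, which solves ICP(q,A,ζ). -/
open Matrix Filter Topology

noncomputable section

variable {n : ℕ}

section AuxSpectral
open scoped ENNReal NNReal

attribute [local instance] Matrix.linftyOpNormedAddCommGroup Matrix.linftyOpNormedRing
  Matrix.linftyOpNormedAlgebra

lemma aux_norm_pow_tendsto (T : Matrix (Fin n) (Fin n) ℝ) (h : specRad T < 1) :
    Tendsto (fun k : ℕ => ‖(T.map Complex.ofReal) ^ k‖) Filter.atTop (𝓝 0) := by
  haveI : CompleteSpace (Matrix (Fin n) (Fin n) ℂ) := FiniteDimensional.complete ℂ _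
  set B := T.map Complex.ofReal with hB
  have hsr : spectralRadius ℂ B < 1 := by
    rw [spectralRadius]
    have hfin := Matrix.finite_spectrum (R := ℂ) B
    have hbdd : BddAbove ((fun μ : ℂ => ‖μ‖) '' spectrum ℂ B) :=
      (hfin.image _).bddAbove
    calc ⨆ μ ∈ spectrum ℂ B, (‖μ‖₊ : ℝ≥0∞)
        ≤ ((specRad T).toNNReal : ℝ≥0∞) := by
          refine iSup₂_le fun μ hμ => ?_
          have h1 : ‖μ‖ ≤ specRad T :=
            le_csSup hbdd ⟨μ, hμ, rfl⟩
          have : ‖μ‖₊ ≤ (specRad T).toNNReal := by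
            rw [← norm_toNNReal]
            exact Real.toNNReal_mono h1
          exact_mod_cast this
      _ < 1 := by
          rw [ENNReal.coe_lt_one_iff]
          exact Real.toNNReal_lt_one.mpr h
  obtain ⟨c, hc1, hc2⟩ := exists_between hsr
  have hctop : c ≠ ⊤ := (hc2.trans_le le_top).ne
  have hgf := spectrum.pow_nnnorm_pow_one_div_tendsto_nhds_spectralRadius B
  have hev : ∀ᶠ k : ℕ in atTop, (‖B ^ k‖₊ : ℝ≥0∞) ^ (1 / (k:ℝ)) < c :=
    hgf.eventually_lt_const hc1
  set r : ℝ := c.toReal with hr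
  have hr0 : 0 ≤ r := ENNReal.toReal_nonneg
  have hr1 : r < 1 := by
    rw [hr, ← ENNReal.toReal_one]
    exact (ENNReal.toReal_lt_toReal hctop ENNReal.one_ne_top).mpr hc2
  have hbound : ∀ᶠ k : ℕ in atTop, ‖B ^ k‖ ≤ r ^ k := by
    filter_upwards [hev, eventually_ge_atTop 1] with k hk hk1
    have hk0 : (k : ℝ) ≠ 0 := Nat.cast_ne_zero.mpr (by omega)
    have h1 : ((‖B ^ k‖₊ : ℝ≥0∞) ^ (1 / (k:ℝ))) ^ (k:ℝ) ≤ c ^ (k:ℝ) :=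
      ENNReal.rpow_le_rpow hk.le (Nat.cast_nonneg k)
    rw [← ENNReal.rpow_mul, one_div_mul_cancel hk0, ENNReal.rpow_one] at h1
    rw [ENNReal.rpow_natCast] at h1
    have h2 : ‖B ^ k‖ ≤ (c ^ k).toReal := by
      have := (ENNReal.toReal_le_toReal (by simp) (ENNReal.pow_ne_top hctop)).mpr h1
      simpa using this
    simpa [ENNReal.toReal_pow] using h2
  refine squeeze_zero' (Eventually.of_forall fun k => norm_nonneg _) hbound ?_
  exact tendsto_pow_atTop_nhds_zero_of_lt_one hr0 hr1

lemma aux_pow_mulVec_entry_tendsto (T : Matrix (Fin n) (Fin n) ℝ) (h : specRad T < 1)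
    (v : Fin n → ℝ) (i : Fin n) :
    Tendsto (fun k : ℕ => (T ^ k *ᵥ v) i) atTop (𝓝 0) := by
  have hnorm := aux_norm_pow_tendsto T h
  set C := ∑ j, |v j| with hCdef
  have hvC : ∀ j, |v j| ≤ C := fun j =>
    Finset.single_le_sum (fun j _ => abs_nonneg (v j)) (Finset.mem_univ j)
  have key : ∀ k : ℕ, |(T ^ k *ᵥ v) i| ≤ ‖(T.map Complex.ofReal) ^ k‖ * C := by
    intro k
    have hBk : (T.map Complex.ofReal) ^ k = (T ^ k).map Complex.ofReal := by
      induction k with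
      | zero => simp [Matrix.map_one _ Complex.ofReal_zero Complex.ofReal_one]
      | succ k ih =>
          rw [pow_succ, pow_succ, ih]
          exact (Matrix.map_mul (f := Complex.ofRealHom)).symm
    have hrow : ∑ j, |(T ^ k) i j| ≤ ‖(T.map Complex.ofReal) ^ k‖ := by
      have h1 : (∑ j, ‖((T.map Complex.ofReal) ^ k) i j‖₊) ≤ ‖(T.map Complex.ofReal) ^ k‖₊ := by
        rw [Matrix.linfty_opNNNorm_def]
        exact Finset.le_sup (f := fun i => ∑ j, ‖((T.map Complex.ofReal) ^ k) i j‖₊)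
          (Finset.mem_univ i)
      have h2 : (∑ j, ‖((T.map Complex.ofReal) ^ k) i j‖) ≤ ‖(T.map Complex.ofReal) ^ k‖ := by
        have := NNReal.coe_le_coe.mpr h1
        simpa [NNReal.coe_sum, coe_nnnorm] using this
      rw [hBk]
      rw [hBk] at h2
      simp only [Matrix.map_apply, Complex.norm_real, Real.norm_eq_abs] at h2
      exact h2
    calc |(T ^ k *ᵥ v) i| ≤ ∑ j, |(T ^ k) i j * v j| := by
          rw [Matrix.mulVec, dotProduct]
          exact Finset.abs_sum_le_sum_abs _ _
      _ ≤ ∑ j, |(T ^ k) i j| * C := by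
          refine Finset.sum_le_sum fun j _ => ?_
          rw [abs_mul]
          exact mul_le_mul_of_nonneg_left (hvC j) (abs_nonneg _)
      _ = (∑ j, |(T ^ k) i j|) * C := by rw [Finset.sum_mul]
      _ ≤ ‖(T.map Complex.ofReal) ^ k‖ * C := by
          refine mul_le_mul_of_nonneg_right hrow ?_
          exact Finset.sum_nonneg fun j _ => abs_nonneg _
  have hlim : Tendsto (fun k : ℕ => ‖(T.map Complex.ofReal) ^ k‖ * C) atTop (𝓝 0) := by
    simpa using hnorm.mul_const C
  exact squeeze_zero_norm key hlim

end AuxSpectral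

lemma aux_absBound (B : Matrix (Fin n) (Fin n) ℝ) {u w : Fin n → ℝ}
    (h : ∀ j, |u j| ≤ w j) (i : Fin n) : |(B *ᵥ u) i| ≤ (matAbs B *ᵥ w) i := by
  rw [Matrix.mulVec, dotProduct]
  refine le_trans (Finset.abs_sum_le_sum_abs _ _) ?_
  rw [Matrix.mulVec, dotProduct]
  refine Finset.sum_le_sum fun j _ => ?_
  rw [abs_mul]
  calc |B i j| * |u j| ≤ |B i j| * w j :=
        mul_le_mul_of_nonneg_left (h j) (abs_nonneg _)
    _ = matAbs B i j * w j := rfl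

lemma aux_mono {B : Matrix (Fin n) (Fin n) ℝ} (hB : ∀ i j, 0 ≤ B i j) {u w : Fin n → ℝ}
    (h : ∀ j, u j ≤ w j) (i : Fin n) : (B *ᵥ u) i ≤ (B *ᵥ w) i := by
  rw [Matrix.mulVec, dotProduct, Matrix.mulVec, dotProduct]
  exact Finset.sum_le_sum fun j _ => mul_le_mul_of_nonneg_left (h j) (hB i j)

lemma aux_matAbs_nonneg (B : Matrix (Fin n) (Fin n) ℝ) : ∀ i j, 0 ≤ matAbs B i j :=
  fun i j => abs_nonneg _

lemma aux_mul_nonneg {P Q : Matrix (Fin n) (Fin n) ℝ} (hP : ∀ i j, 0 ≤ P i j)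
    (hQ : ∀ i j, 0 ≤ Q i j) : ∀ i j, 0 ≤ (P * Q) i j := by
  intro i j
  rw [Matrix.mul_apply]
  exact Finset.sum_nonneg fun l _ => mul_nonneg (hP i l) (hQ l j)

lemma aux_diag_mulVec {Ω : Matrix (Fin n) (Fin n) ℝ} (hΩ : Ω.IsDiag) (v : Fin n → ℝ)
    (i : Fin n) : (Ω *ᵥ v) i = Ω i i * v i := by
  rw [Matrix.mulVec, dotProduct]
  rw [Finset.sum_eq_single i]
  · intro j _ hj
    rw [hΩ (Ne.symm hj), zero_mul]
  · intro h; exact absurd (Finset.mem_univ i) h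


theorem stmt4 (A M N φ Ω₁ Ω₂ Ψ : Matrix (Fin n) (Fin n) ℝ)
    (q : Fin n → ℝ) (ζ : (Fin n → ℝ) → (Fin n → ℝ)) (γ : ℝ)
    (hγ : 0 < γ) (hΩ₁ : PosDiag Ω₁) (hΩ₂ : PosDiag Ω₂) (hφ : φ.IsDiag)
    (hsplit : A = (M + φ) - (N + φ))
    (hP : IsPmat A)
    (hA : IsUnit A) (hW : IsUnit (Ω₂ + M * Ω₁ + φ * Ω₁))
    (hΨ : ∀ i j, 0 ≤ Ψ i j)
    (hLip : ∀ u v : Fin n → ℝ, ∀ i, |(ζ u - ζ v) i| ≤ (Ψ *ᵥ vecAbs (u - v)) i)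
    (x z : ℕ → Fin n → ℝ) (hmthd : Method31 A M N φ Ω₁ Ω₂ q ζ γ x z)
    (xs zs : Fin n → ℝ)
    (hzs : A *ᵥ zs = γ⁻¹ • (Ω₂ *ᵥ (vecAbs xs - xs)) - q)
    (hfix : (Ω₂ + M * Ω₁ + φ * Ω₁) *ᵥ xs =
      (N * Ω₁ + φ * Ω₁) *ᵥ xs + (Ω₂ - A * Ω₁) *ᵥ vecAbs xs
        - γ • (A *ᵥ ζ zs) - γ • q)
    (hρ : specRad (matAbs (Ω₂ + M * Ω₁ + φ * Ω₁)⁻¹ *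
      (matAbs (N * Ω₁ + φ * Ω₁) + matAbs (Ω₂ - A * Ω₁)
        + (2 : ℝ) • (matAbs A * Ψ * matAbs A⁻¹ * Ω₂))) < 1) :

    Tendsto x atTop (𝓝 xs) ∧ Tendsto z atTop (𝓝 zs) ∧ SolvesICP A q ζ zs := by
  obtain ⟨hm1, hm2⟩ := hmthd
  set W := Ω₂ + M * Ω₁ + φ * Ω₁ with hWdef
  set S1 := matAbs (N * Ω₁ + φ * Ω₁) with hS1def
  set S2 := matAbs (Ω₂ - A * Ω₁) with hS2def
  set P := matAbs A * Ψ * matAbs A⁻¹ * Ω₂ with hPdef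
  set T := matAbs W⁻¹ * (S1 + S2 + (2 : ℝ) • P) with hTdef
  have hWdet : IsUnit W.det := (Matrix.isUnit_iff_isUnit_det _).mp hW
  have hAdet : IsUnit A.det := (Matrix.isUnit_iff_isUnit_det _).mp hA
  have hAinvA : ∀ v : Fin n → ℝ, A⁻¹ *ᵥ (A *ᵥ v) = v := by
    intro v
    rw [Matrix.mulVec_mulVec, Matrix.nonsing_inv_mul _ hAdet, Matrix.one_mulVec]
  have hAcancel : ∀ u w : Fin n → ℝ, A *ᵥ u = A *ᵥ w → u = w := by
    intro u w h
    have h2 := congrArg (fun v => A⁻¹ *ᵥ v) h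
    simpa [hAinvA] using h2
  set e : ℕ → Fin n → ℝ := fun k => vecAbs (x k - xs) with hedef
  -- nonnegativity facts
  have hΩ₂nn : ∀ i j, 0 ≤ Ω₂ i j := by
    intro i j
    by_cases h : i = j
    · subst h; exact (hΩ₂.2 i).le
    · rw [hΩ₂.1 h]
  have hPnn : ∀ i j, 0 ≤ P i j :=
    aux_mul_nonneg (aux_mul_nonneg (aux_mul_nonneg (aux_matAbs_nonneg A) hΨ)
      (aux_matAbs_nonneg A⁻¹)) hΩ₂nn
  have hTnn : ∀ i j, 0 ≤ T i j := by
    refine aux_mul_nonneg (aux_matAbs_nonneg _) fun i j => ?_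
    have h1 := aux_matAbs_nonneg (N * Ω₁ + φ * Ω₁) i j
    have h2 := aux_matAbs_nonneg (Ω₂ - A * Ω₁) i j
    have h3 := hPnn i j
    rw [← hS1def] at h1
    rw [← hS2def] at h2
    simp only [Matrix.add_apply, Matrix.smul_apply, smul_eq_mul]
    linarith
  -- z difference formula
  have hzdiff : ∀ k, z k - zs =
      γ⁻¹ • (A⁻¹ *ᵥ (Ω₂ *ᵥ ((vecAbs (x k) - x k) - (vecAbs xs - xs)))) := by
    intro k
    have h1 : A *ᵥ (z k - zs) = γ⁻¹ • (Ω₂ *ᵥ ((vecAbs (x k) - x k) - (vecAbs xs - xs))) := by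
      rw [Matrix.mulVec_sub, hm1 k, hzs]
      simp only [Matrix.mulVec_sub, Matrix.mulVec_add, smul_sub, smul_add]
      abel
    rw [← hAinvA (z k - zs), h1, Matrix.mulVec_smul]
  -- x difference formula
  have hxs2 : xs = W⁻¹ *ᵥ ((N * Ω₁ + φ * Ω₁) *ᵥ xs + (Ω₂ - A * Ω₁) *ᵥ vecAbs xs
      - γ • (A *ᵥ ζ zs) - γ • q) := by
    rw [← hfix, Matrix.mulVec_mulVec, Matrix.nonsing_inv_mul _ hWdet, Matrix.one_mulVec]
  have hdiff : ∀ k, x (k+1) - xs = W⁻¹ *ᵥ ((N * Ω₁ + φ * Ω₁) *ᵥ (x k - xs)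
      + (Ω₂ - A * Ω₁) *ᵥ (vecAbs (x k) - vecAbs xs) - γ • (A *ᵥ (ζ (z k) - ζ zs))) := by
    intro k
    have key : W⁻¹ *ᵥ (((N * Ω₁ + φ * Ω₁) *ᵥ x k + (Ω₂ - A * Ω₁) *ᵥ vecAbs (x k)
        - γ • (A *ᵥ ζ (z k)) - γ • q) - ((N * Ω₁ + φ * Ω₁) *ᵥ xs
        + (Ω₂ - A * Ω₁) *ᵥ vecAbs xs - γ • (A *ᵥ ζ zs) - γ • q))
        = x (k+1) - xs := by
      rw [Matrix.mulVec_sub, ← hm2 k, ← hxs2]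
    rw [← key]
    congr 1
    simp only [Matrix.mulVec_sub, Matrix.mulVec_add, smul_sub, smul_add]
    abel
  -- contraction step
  have hstep : ∀ k i, e (k+1) i ≤ (T *ᵥ e k) i := by
    intro k i
    have hd : ∀ m, |((vecAbs (x k) - x k) - (vecAbs xs - xs)) m| ≤ ((2:ℝ) • e k) m := by
      intro m
      simp only [Pi.sub_apply, Pi.smul_apply, smul_eq_mul, hedef, vecAbs]
      have h1 : |(|x k m| - |xs m|)| ≤ |x k m - xs m| := abs_abs_sub_abs_le_abs_sub _ _
      have h2 : |(|x k m| - |xs m|) - (x k m - xs m)|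
          ≤ |(|x k m| - |xs m|)| + |x k m - xs m| := abs_sub _ _
      have h3 : |(|x k m| - x k m) - (|xs m| - xs m)|
          = |(|x k m| - |xs m|) - (x k m - xs m)| := by
        congr 1; ring
      rw [h3]
      linarith
    have hzabs : ∀ m, |(z k - zs) m| ≤ (γ⁻¹ • (matAbs A⁻¹ *ᵥ (Ω₂ *ᵥ ((2:ℝ) • e k)))) m := by
      intro m
      rw [hzdiff k]
      simp only [Pi.smul_apply, smul_eq_mul, abs_mul, abs_inv, abs_of_pos hγ]
      refine mul_le_mul_of_nonneg_left ?_ (inv_nonneg.mpr hγ.le)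
      refine aux_absBound A⁻¹ (fun j => ?_) m
      rw [aux_diag_mulVec hΩ₂.1, aux_diag_mulVec hΩ₂.1, abs_mul, abs_of_nonneg (hΩ₂.2 j).le]
      exact mul_le_mul_of_nonneg_left (hd j) (hΩ₂.2 j).le
    have hζb : ∀ m, |(ζ (z k) - ζ zs) m|
        ≤ (Ψ *ᵥ (γ⁻¹ • (matAbs A⁻¹ *ᵥ (Ω₂ *ᵥ ((2:ℝ) • e k))))) m := by
      intro m
      exact le_trans (hLip (z k) zs m) (aux_mono hΨ (fun j => hzabs j) m)
    have hvec : matAbs A *ᵥ (Ψ *ᵥ (γ⁻¹ • (matAbs A⁻¹ *ᵥ (Ω₂ *ᵥ ((2:ℝ) • e k)))))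
        = (γ⁻¹ * 2) • (P *ᵥ e k) := by
      rw [hPdef]
      simp only [Matrix.mulVec_smul, Matrix.mulVec_mulVec, smul_smul, Matrix.mul_assoc]
    have hu3 : ∀ m, |(γ • (A *ᵥ (ζ (z k) - ζ zs))) m| ≤ (((2:ℝ) • P) *ᵥ e k) m := by
      intro m
      simp only [Pi.smul_apply, smul_eq_mul, abs_mul, abs_of_pos hγ]
      have h1 := aux_absBound A hζb m
      rw [hvec] at h1
      have h2 : γ * |(A *ᵥ (ζ (z k) - ζ zs)) m| ≤ γ * ((γ⁻¹ * 2) * (P *ᵥ e k) m) := by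
        refine mul_le_mul_of_nonneg_left ?_ hγ.le
        simpa [Pi.smul_apply, smul_eq_mul] using h1
      calc γ * |(A *ᵥ (ζ (z k) - ζ zs)) m| ≤ γ * ((γ⁻¹ * 2) * (P *ᵥ e k) m) := h2
        _ = 2 * (P *ᵥ e k) m := by field_simp
        _ = (((2:ℝ) • P) *ᵥ e k) m := by
            rw [Matrix.smul_mulVec]
            simp [Pi.smul_apply, smul_eq_mul]
    have hDabs : ∀ j, |((N * Ω₁ + φ * Ω₁) *ᵥ (x k - xs)
        + (Ω₂ - A * Ω₁) *ᵥ (vecAbs (x k) - vecAbs xs)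
        - γ • (A *ᵥ (ζ (z k) - ζ zs))) j| ≤ ((S1 + S2 + (2:ℝ) • P) *ᵥ e k) j := by
      intro j
      have b1 : |((N * Ω₁ + φ * Ω₁) *ᵥ (x k - xs)) j| ≤ (S1 *ᵥ e k) j := by
        rw [hS1def]
        exact aux_absBound _ (fun m => le_of_eq rfl) j
      have b2 : |((Ω₂ - A * Ω₁) *ᵥ (vecAbs (x k) - vecAbs xs)) j| ≤ (S2 *ᵥ e k) j := by
        rw [hS2def]
        refine aux_absBound _ (fun m => ?_) j
        simp only [Pi.sub_apply, hedef, vecAbs]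
        exact abs_abs_sub_abs_le_abs_sub _ _
      have b3 := hu3 j
      simp only [Pi.add_apply, Pi.sub_apply, Matrix.add_mulVec] at b1 b2 b3 ⊢
      have t1 : ∀ a b c : ℝ, |a + b - c| ≤ |a| + |b| + |c| := by
        intro a b c
        calc |a + b - c| = |a + b + (-c)| := by rw [sub_eq_add_neg]
          _ ≤ |a| + |b| + |-c| := abs_add_three _ _ _
          _ = |a| + |b| + |c| := by rw [abs_neg]
      exact le_trans (t1 _ _ _) (by linarith)
    calc e (k+1) i = |(W⁻¹ *ᵥ ((N * Ω₁ + φ * Ω₁) *ᵥ (x k - xs)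
          + (Ω₂ - A * Ω₁) *ᵥ (vecAbs (x k) - vecAbs xs)
          - γ • (A *ᵥ (ζ (z k) - ζ zs)))) i| := by
          show |(x (k+1) - xs) i| = _
          rw [hdiff k]
      _ ≤ (matAbs W⁻¹ *ᵥ ((S1 + S2 + (2:ℝ) • P) *ᵥ e k)) i := aux_absBound _ hDabs i
      _ = (T *ᵥ e k) i := by rw [Matrix.mulVec_mulVec, ← hTdef]
  -- iterate
  have hiter : ∀ k, ∀ i, e k i ≤ ((T ^ k) *ᵥ e 0) i := by
    intro k
    induction k with
    | zero => intro i; simp [Matrix.one_mulVec]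
    | succ k ih =>
        intro i
        refine le_trans (hstep k i) (le_of_le_of_eq (aux_mono hTnn ih i) ?_)
        rw [Matrix.mulVec_mulVec, ← pow_succ']
  -- convergence of x
  have hxconv : Tendsto x atTop (𝓝 xs) := by
    rw [tendsto_pi_nhds]
    intro i
    have h0 : Tendsto (fun k => ((T ^ k) *ᵥ e 0) i) atTop (𝓝 0) :=
      aux_pow_mulVec_entry_tendsto T hρ (e 0) i
    have habs : Tendsto (fun k => e k i) atTop (𝓝 0) :=
      squeeze_zero (fun k => abs_nonneg _) (fun k => hiter k i) h0
    have h1 : Tendsto (fun k => x k i - xs i) atTop (𝓝 0) := by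
      rw [tendsto_zero_iff_abs_tendsto_zero]
      exact habs
    simpa using h1.add_const (xs i)
  -- convergence of z
  have hzk : ∀ k, z k = A⁻¹ *ᵥ (γ⁻¹ • (Ω₂ *ᵥ (vecAbs (x k) - x k)) - q) := fun k => by
    rw [← hm1 k, hAinvA]
  have hzsf : zs = A⁻¹ *ᵥ (γ⁻¹ • (Ω₂ *ᵥ (vecAbs xs - xs)) - q) := by
    rw [← hzs, hAinvA]
  have hF : Continuous (fun y : Fin n → ℝ => A⁻¹ *ᵥ (γ⁻¹ • (Ω₂ *ᵥ (vecAbs y - y)) - q)) := by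
    have h1 : Continuous (fun y : Fin n → ℝ => vecAbs y - y) := by
      refine continuous_pi fun i => ?_
      exact ((continuous_apply i).abs).sub (continuous_apply i)
    exact continuous_const.matrix_mulVec
      ((((continuous_const.matrix_mulVec h1).const_smul γ⁻¹)).sub continuous_const)
  have hzconv : Tendsto z atTop (𝓝 zs) := by
    have hcomp : z = (fun y : Fin n → ℝ =>
        A⁻¹ *ᵥ (γ⁻¹ • (Ω₂ *ᵥ (vecAbs y - y)) - q)) ∘ x := funext hzk
    rw [hcomp, hzsf]
    exact (hF.tendsto xs).comp hxconv
  -- the solution property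
  have hw : ∀ i, γ * (A *ᵥ zs + q) i = Ω₂ i i * (vecAbs xs i - xs i) := by
    intro i
    have h1 : (A *ᵥ zs + q) i = γ⁻¹ * (Ω₂ *ᵥ (vecAbs xs - xs)) i := by
      rw [hzs]; simp [Pi.smul_apply, smul_eq_mul]
    rw [h1, aux_diag_mulVec hΩ₂.1]
    field_simp
    rfl
  have hAΩ : M * Ω₁ = A * Ω₁ + N * Ω₁ := by
    rw [hsplit, Matrix.sub_mul, Matrix.add_mul, Matrix.add_mul]
    abel
  have hzs' : ∀ i, γ * (A *ᵥ zs) i = (Ω₂ *ᵥ (vecAbs xs - xs)) i - γ * q i := by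
    intro i
    rw [hzs]
    simp only [Pi.sub_apply, Pi.smul_apply, smul_eq_mul]
    field_simp
  have hkey : Ω₁ *ᵥ (xs + vecAbs xs) = γ • (zs - ζ zs) := by
    apply hAcancel
    have hfix' := hfix
    rw [hWdef, hAΩ] at hfix'
    funext i
    have hf := congrFun hfix' i
    have hz := hzs' i
    simp only [Matrix.mulVec_mulVec, Matrix.mulVec_smul, Matrix.add_mulVec, Matrix.sub_mulVec,
      Matrix.mulVec_add, Matrix.mulVec_sub, Pi.add_apply, Pi.sub_apply, Pi.smul_apply,
      smul_eq_mul, mul_sub] at hf hz ⊢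
    linarith
  have hv : ∀ i, γ * (zs - ζ zs) i = Ω₁ i i * (xs i + vecAbs xs i) := by
    intro i
    have := congrFun hkey i
    rw [aux_diag_mulVec hΩ₁.1] at this
    simp only [Pi.add_apply, Pi.smul_apply, smul_eq_mul] at this
    linarith [this]
  have hsol1 : ∀ i, 0 ≤ (A *ᵥ zs + q) i := by
    intro i
    have h1 : 0 ≤ γ * (A *ᵥ zs + q) i := by
      rw [hw i]
      exact mul_nonneg (hΩ₂.2 i).le (by simp [vecAbs]; exact le_abs_self _)
    exact nonneg_of_mul_nonneg_right h1 hγ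
  have hsol2 : ∀ i, 0 ≤ (zs - ζ zs) i := by
    intro i
    have h1 : 0 ≤ γ * (zs - ζ zs) i := by
      rw [hv i]
      refine mul_nonneg (hΩ₁.2 i).le ?_
      have := neg_abs_le (xs i)
      simp only [vecAbs]
      linarith
    exact nonneg_of_mul_nonneg_right h1 hγ
  have hsol3 : (zs - ζ zs) ⬝ᵥ (A *ᵥ zs + q) = 0 := by
    rw [dotProduct]
    refine Finset.sum_eq_zero fun i _ => ?_
    have h1 : (γ * (zs - ζ zs) i) * (γ * (A *ᵥ zs + q) i) = 0 := by
      rw [hv i, hw i]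
      simp only [vecAbs]
      rcases abs_cases (xs i) with ⟨h, _⟩ | ⟨h, _⟩ <;> rw [h] <;> ring
    have h2 : γ * γ * ((zs - ζ zs) i * (A *ᵥ zs + q) i) = 0 := by
      rw [← h1]; ring
    have h3 : γ * γ ≠ 0 := by positivity
    exact (mul_eq_zero.mp h2).resolve_left h3
  exact ⟨hxconv, hzconv, hsol1, hsol2, hsol3⟩

end
end
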